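/- arXiv:1902.00872 — 6 statements merged into one kernel-verified Lean document; each statement's English description precedes it below -/
import Mathlib

section
/- Let ρ = Σ_{k≥1} a_k ρ_k be a probability measure on the unit circle, where a_k ≥ 0 with Σ a_k = 1, and each ρ_k is a probability measure invariant under rotation by 2π/2^k. Then for every n, e_{2^n}(ρ)² ≥ Σ_{k≥n+1} a_k. -/
open MeasureTheory Complex Polynomial

/-- The squared Szegő minimum `e_n(ρ)²`. -/
noncomputable def szegoE2 (ρ : Measure ℂ) (n : ℕ) : ℝ :=
  sInf { x | ∃ q : Polynomial ℂ, q.Monic ∧ q.natDegree = n ∧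
    x = ∫ z, ‖q.eval z‖ ^ 2 ∂ρ }

/-!
Let `ω` be a primitive `m`-th root of unity and `q` monic of degree `D < m`. The discrete
Fourier sum `∑ⱼ ω^{-jD} q(ωʲ z)` equals `m z^D`, so on the unit circle the triangle and
Cauchy–Schwarz inequalities give `∑ⱼ |q(ωʲ z)|² ≥ m`. Averaging this over a measure `μ` on the
circle invariant under `z ↦ ω z` gives `∫ |q|² dμ ≥ μ(𝕋)`. A monic `q` of degree `2ⁿ` therefore
has `∫ |q|² dρ_k ≥ 1` for every `k ≥ n + 1` (take `m = 2^k`), and summing with the weights `a_k`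
bounds `∫ |q|² dρ` below by the tail `∑_{k ≥ n+1} a_k`.
-/

open scoped ENNReal
open Finset

namespace IsPrimitiveRoot

variable {K : Type*} [Field K] {ω : K} {m : ℕ}

theorem geom_sum_pow_eq_zero (hω : IsPrimitiveRoot ω m) {l : ℕ} (hl0 : l ≠ 0) (hlm : l < m) :
    ∑ j ∈ range m, (ω ^ l) ^ j = 0 := by
  rw [geom_sum_eq (hω.pow_ne_one_of_pos_of_lt hl0 hlm), ← pow_mul, mul_comm, pow_mul,
    hω.pow_eq_one, one_pow, sub_self, zero_div]

theorem sum_inv_pow_mul_eval {q : K[X]} {D : ℕ} (hω : IsPrimitiveRoot ω m)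
    (hq : q.natDegree ≤ D) (hD : D < m) (z : K) :
    ∑ j ∈ range m, ((ω ^ j) ^ D)⁻¹ * q.eval (ω ^ j * z) = m * q.coeff D * z ^ D := by
  have hω0 : ω ≠ 0 := hω.ne_zero (by omega)
  have hterm : ∀ i ∈ range (D + 1), ∀ j, ((ω ^ j) ^ D)⁻¹ * (q.coeff i * (ω ^ j * z) ^ i)
      = q.coeff i * z ^ i * ((ω⁻¹) ^ (D - i)) ^ j := by
    intro i hi j
    obtain ⟨d, rfl⟩ := Nat.exists_eq_add_of_le (mem_range_succ_iff.1 hi)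
    rw [Nat.add_sub_cancel_left, inv_pow, inv_pow, pow_right_comm]
    field_simp
    ring
  have hgeom : ∀ i ∈ range (D + 1),
      ∑ j ∈ range m, ((ω⁻¹) ^ (D - i)) ^ j = if i = D then (m : K) else 0 := by
    intro i hi
    rw [mem_range] at hi
    split_ifs with hiD
    · simp [hiD]
    · exact hω.inv.geom_sum_pow_eq_zero (by omega) (by omega)
  calc ∑ j ∈ range m, ((ω ^ j) ^ D)⁻¹ * q.eval (ω ^ j * z)
      = ∑ i ∈ range (D + 1), q.coeff i * z ^ i * ∑ j ∈ range m, ((ω⁻¹) ^ (D - i)) ^ j := by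
        simp_rw [eval_eq_sum_range' (Nat.lt_succ_of_le hq), mul_sum]
        rw [sum_comm]
        exact sum_congr rfl fun i hi => sum_congr rfl fun j _ => hterm i hi j
    _ = m * q.coeff D * z ^ D := by
        rw [sum_congr rfl fun i hi => congrArg _ (hgeom i hi)]
        simp only [mul_ite, mul_zero, sum_ite_eq', mem_range, lt_add_one, if_true]
        ring

end IsPrimitiveRoot

theorem IsPrimitiveRoot.card_le_sum_norm_eval_sq {ω : ℂ} {m : ℕ} (hω : IsPrimitiveRoot ω m)
    {q : ℂ[X]} (hq : q.Monic) (hdeg : q.natDegree < m) {z : ℂ} (hz : ‖z‖ = 1) :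
    (m : ℝ) ≤ ∑ j ∈ range m, ‖q.eval (ω ^ j * z)‖ ^ 2 := by
  have hωn : ‖ω‖ = 1 := norm_eq_one_of_pow_eq_one hω.pow_eq_one (by omega)
  have hsum : (m : ℝ) ≤ ∑ j ∈ range m, ‖q.eval (ω ^ j * z)‖ :=
    calc (m : ℝ) = ‖∑ j ∈ range m, ((ω ^ j) ^ q.natDegree)⁻¹ * q.eval (ω ^ j * z)‖ := by
          rw [hω.sum_inv_pow_mul_eval le_rfl hdeg, hq.coeff_natDegree]
          simp [hz]
      _ ≤ ∑ j ∈ range m, ‖q.eval (ω ^ j * z)‖ :=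
          (norm_sum_le _ _).trans_eq (by simp [hωn])
  have hm : (0 : ℝ) < m := by exact_mod_cast hdeg.trans_le' (Nat.zero_le _)
  have hcs := sq_sum_le_card_mul_sum_sq (s := range m) (f := fun j => ‖q.eval (ω ^ j * z)‖)
  rw [card_range] at hcs
  nlinarith [pow_le_pow_left₀ hm.le hsum 2]

theorem MeasureTheory.Measure.measure_univ_le_lintegral_norm_eval_sq {μ : Measure ℂ} {ω : ℂ}
    {m : ℕ} (hω : IsPrimitiveRoot ω m) (hμ : μ (Metric.sphere 0 1)ᶜ = 0)
    (hinv : μ.map (ω * ·) = μ) {q : ℂ[X]} (hq : q.Monic) (hdeg : q.natDegree < m) :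
    μ Set.univ ≤ ∫⁻ z, ENNReal.ofReal (‖q.eval z‖ ^ 2) ∂μ := by
  set f : ℂ → ℝ≥0∞ := fun z => ENNReal.ofReal (‖q.eval z‖ ^ 2)
  have hf : Measurable f := (q.continuous.norm.pow 2).measurable.ennreal_ofReal
  have hrot : ∀ j, ∫⁻ z, f (ω ^ j * z) ∂μ = ∫⁻ z, f z ∂μ := fun j => by
    have := (MeasurePreserving.mk (measurable_const_mul ω) hinv).iterate j
    rw [mul_left_iterate] at this
    exact this.lintegral_comp hf
  have hpt : ∀ᵐ z ∂μ, (m : ℝ≥0∞) ≤ ∑ j ∈ range m, f (ω ^ j * z) := by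
    filter_upwards [measure_eq_zero_iff_ae_notMem.1 hμ] with z hz
    rw [Set.notMem_compl_iff, mem_sphere_zero_iff_norm] at hz
    rw [← ENNReal.ofReal_sum_of_nonneg fun _ _ => by positivity, ← ENNReal.ofReal_natCast]
    exact ENNReal.ofReal_le_ofReal (hω.card_le_sum_norm_eval_sq hq hdeg hz)
  have hm : (m : ℝ≥0∞) ≠ 0 := by exact_mod_cast (Nat.zero_le _).trans_lt hdeg |>.ne'
  refine (ENNReal.mul_le_mul_iff_right hm (ENNReal.natCast_ne_top m)).1 ?_
  calc (m : ℝ≥0∞) * μ Set.univ = ∫⁻ _, (m : ℝ≥0∞) ∂μ := (lintegral_const _).symm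
    _ ≤ ∫⁻ z, ∑ j ∈ range m, f (ω ^ j * z) ∂μ := lintegral_mono_ae hpt
    _ = m * ∫⁻ z, f z ∂μ := by
        rw [lintegral_finsetSum (f := fun j z => f (ω ^ j * z)) _
          fun j _ => hf.comp (measurable_const_mul _)]
        simp [hrot]

section

variable {α : Type*} [MeasurableSpace α]

theorem MeasureTheory.isProbabilityMeasure_sum_smul {ι : Type*} {w : ι → ℝ≥0∞}
    (hw : ∑' k, w k = 1) (μ : ι → Measure α) [∀ k, IsProbabilityMeasure (μ k)] :
    IsProbabilityMeasure (Measure.sum fun k => w k • μ k) :=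
  ⟨by simp [hw]⟩

theorem MeasureTheory.tsum_tail_le_lintegral_sum_smul {w : ℕ → ℝ≥0∞} {μ : ℕ → Measure α}
    {f : α → ℝ≥0∞} (n : ℕ) (h : ∀ k, n ≤ k → μ k Set.univ ≤ ∫⁻ x, f x ∂μ k) :
    ∑' j, w (n + j) * μ (n + j) Set.univ ≤ ∫⁻ x, f x ∂Measure.sum fun k => w k • μ k := by
  rw [lintegral_sum_measure]
  simp_rw [lintegral_smul_measure]
  calc ∑' j, w (n + j) * μ (n + j) Set.univ
      ≤ ∑' j, w (n + j) * ∫⁻ x, f x ∂μ (n + j) :=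
        ENNReal.tsum_le_tsum fun j => mul_le_mul_right (h _ (Nat.le_add_right n j)) _
    _ ≤ ∑' k, w k * ∫⁻ x, f x ∂μ k :=
        ENNReal.tsum_comp_le_tsum_of_injective (add_right_injective n) _

theorem Continuous.integrable_of_measure_compl_eq_zero [TopologicalSpace α] [T2Space α]
    [OpensMeasurableSpace α] {E : Type*} [NormedAddCommGroup E] {μ : Measure α}
    [IsFiniteMeasure μ] {s : Set α} (hs : IsCompact s) (hμ : μ sᶜ = 0) {g : α → E}
    (hg : Continuous g) : Integrable g μ := by
  rw [← Measure.restrict_eq_self_of_ae_mem (ae_iff.2 hμ)]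
  exact hg.continuousOn.integrableOn_compact hs

end

theorem le_szegoE2 {ρ : Measure ℂ} [IsFiniteMeasure ρ] (hρ : ρ (Metric.sphere 0 1)ᶜ = 0)
    {c : ℝ} {n : ℕ} (h : ∀ q : ℂ[X], q.Monic → q.natDegree = n →
      ENNReal.ofReal c ≤ ∫⁻ z, ENNReal.ofReal (‖q.eval z‖ ^ 2) ∂ρ) :
    c ≤ szegoE2 ρ n := by
  refine le_csInf ⟨_, X ^ n, monic_X_pow n, natDegree_X_pow n, rfl⟩ ?_
  rintro _ ⟨q, hqm, hqd, rfl⟩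
  have hint : Integrable (fun z => ‖q.eval z‖ ^ 2) ρ :=
    (q.continuous.norm.pow 2).integrable_of_measure_compl_eq_zero (isCompact_sphere 0 1) hρ
  rw [← ENNReal.ofReal_le_ofReal_iff (integral_nonneg fun _ => by positivity),
    ofReal_integral_eq_lintegral_ofReal hint (ae_of_all _ fun _ => by positivity)]
  exact h q hqm hqd

/-- If `ρ = Σ_{k≥1} a_k ρ_k` with `a_k ≥ 0`, `Σ a_k = 1`, and each `ρ_k` a probability
measure on the unit circle invariant under rotation by `2π/2^k`, then
`e_{2^n}(ρ)² ≥ Σ_{k≥n+1} a_k`.  (Index `k+1` plays the role of `k ≥ 1`.) -/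
theorem stmt1 (a : ℕ → ℝ) (ha : ∀ k, 0 ≤ a (k + 1))
    (hsum : ∑' k : ℕ, a (k + 1) = 1)
    (ρk : ℕ → Measure ℂ) (hprob : ∀ k, IsProbabilityMeasure (ρk (k + 1)))
    (hsupp : ∀ k, ρk (k + 1) (Metric.sphere (0 : ℂ) 1)ᶜ = 0)
    (hinv : ∀ k, Measure.map
      (fun z => Complex.exp (2 * Real.pi * Complex.I / (2 ^ (k + 1) : ℕ)) * z)
        (ρk (k + 1)) = ρk (k + 1))
    (n : ℕ) :
    (∑' j : ℕ, a (n + 1 + j)) ≤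
      szegoE2 (Measure.sum fun k : ℕ =>
        ENNReal.ofReal (a (k + 1)) • ρk (k + 1)) (2 ^ n) := by
  have hs : Summable fun k => a (k + 1) := by
    by_contra h
    simp [tsum_eq_zero_of_not_summable h] at hsum
  have hw : ∑' k, ENNReal.ofReal (a (k + 1)) = 1 := by
    rw [← ENNReal.ofReal_tsum_of_nonneg ha hs, hsum, ENNReal.ofReal_one]
  have := isProbabilityMeasure_sum_smul hw (fun k => ρk (k + 1))
  have htail : ∀ j, 0 ≤ a (n + 1 + j) := fun j => add_right_comm n 1 j ▸ ha (n + j)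
  have htail_summable : Summable fun j => a (n + 1 + j) :=
    (hs.comp_injective (add_right_injective n)).congr fun j => by simp [add_right_comm]
  refine le_szegoE2 (by simp [Measure.sum_apply_eq_zero'
    Metric.isClosed_sphere.measurableSet.compl, hsupp]) fun q hqm hqd => ?_
  have hlow : ∀ k, n ≤ k →
      ρk (k + 1) Set.univ ≤ ∫⁻ z, ENNReal.ofReal (‖q.eval z‖ ^ 2) ∂ρk (k + 1) :=
    fun k hk => Measure.measure_univ_le_lintegral_norm_eval_sq
      (isPrimitiveRoot_exp _ (by positivity)) (hsupp k) (hinv k) hqm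
      (hqd ▸ Nat.pow_lt_pow_right one_lt_two (by omega))
  rw [ENNReal.ofReal_tsum_of_nonneg htail htail_summable]
  simpa [add_right_comm n 1] using tsum_tail_le_lintegral_sum_smul
    (w := fun k => ENNReal.ofReal (a (k + 1))) (μ := fun k => ρk (k + 1)) n hlow
end

section
/- Let Λ_{2^k} = {λ ∈ ℂ : λ^{2^k} = 1}, let (a_k)_{k≥0} be nonnegative with Σ a_k = 1, let ρ_k = 2^{-k} Σ_{λ ∈ Λ_{2^{k+1}} \ Λ_{2^k}} δ_λ, and ρ = Σ_{k≥0} a_k ρ_k. Then for every n, e_{2^n}(ρ)² ≤ 4 Σ_{k≥n} a_k. -/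
/-! The monic polynomial `z ^ 2 ^ n - 1` vanishes on `Λ_{2^{k+1}}`, which carries `ρ_k`, for
`k < n`, and it is bounded by `2` on the unit circle, which carries every `ρ_k`. Integrating its
squared modulus against `ρ = ∑ a_k ρ_k` therefore gives at most `4 ∑_{k ≥ n} a_k`. -/

open MeasureTheory Complex Polynomial
open scoped ENNReal

/-- `ρ_k = 2^{-k} Σ_{λ ∈ Λ_{2^{k+1}} \ Λ_{2^k}} δ_λ`; the elements of
`Λ_{2^{k+1}} \ Λ_{2^k}` are `exp(2πi(2j+1)/2^{k+1})`, `0 ≤ j < 2^k`. -/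
noncomputable def rhoDyadic (k : ℕ) : Measure ℂ :=
  ((2 : ENNReal) ^ k)⁻¹ • Measure.sum (fun j : Fin (2 ^ k) =>
    Measure.dirac (Complex.exp (2 * Real.pi * Complex.I *
      (2 * (j : ℕ) + 1) / (2 ^ (k + 1) : ℕ))))

lemma szegoE2_le_integral (ρ : Measure ℂ) {q : ℂ[X]} (hq : q.Monic) :
    szegoE2 ρ q.natDegree ≤ ∫ z, ‖q.eval z‖ ^ 2 ∂ρ :=
  csInf_le ⟨0, by rintro _ ⟨p, -, -, rfl⟩; positivity⟩ ⟨q, hq, rfl, rfl⟩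

lemma lintegral_sum_smul_le_mul_tsum_tail {α : Type*} [MeasurableSpace α]
    (μ : ℕ → Measure α) (w : ℕ → ℝ≥0∞) (f : α → ℝ≥0∞) {n : ℕ} {c : ℝ≥0∞}
    (h_lt : ∀ k < n, ∫⁻ x, f x ∂μ k = 0) (h_le : ∀ k, ∫⁻ x, f x ∂μ k ≤ c) :
    ∫⁻ x, f x ∂Measure.sum (fun k => w k • μ k) ≤ c * ∑' k, w (n + k) := by
  set g : ℕ → ℝ≥0∞ := fun k => w k * ∫⁻ x, f x ∂μ k
  have h_head : ∑ k ∈ Finset.range n, g k = 0 :=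
    Finset.sum_eq_zero fun k hk => by simp [g, h_lt k (Finset.mem_range.1 hk)]
  have h_shift : ∑' k, g k = ∑' k, g (k + n) := by
    simpa [h_head] using (ENNReal.summable.hasSum (f := fun k => g (k + n))).sum_range_add.tsum_eq
  calc ∫⁻ x, f x ∂Measure.sum (fun k => w k • μ k) = ∑' k, g (k + n) := by
        simp only [lintegral_sum_measure, lintegral_smul_measure, smul_eq_mul, h_shift, g]
    _ ≤ ∑' k, c * w (n + k) := by
        refine ENNReal.tsum_le_tsum fun k => ?_
        rw [mul_comm, add_comm]
        exact mul_le_mul_right (h_le _) _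
    _ = c * ∑' k, w (n + k) := ENNReal.tsum_mul_left

instance isProbabilityMeasure_rhoDyadic (k : ℕ) : IsProbabilityMeasure (rhoDyadic k) := by
  constructor
  simp [rhoDyadic, ENNReal.inv_mul_cancel]

lemma rhoDyadic_pt_pow_eq_one (k j : ℕ) :
    Complex.exp (2 * Real.pi * Complex.I * (2 * (j : ℕ) + 1) / (2 ^ (k + 1) : ℕ)) ^ 2 ^ (k + 1)
      = 1 := by
  rw [← Complex.exp_nat_mul]
  convert Complex.exp_nat_mul_two_pi_mul_I (2 * j + 1) using 2
  push_cast
  field_simp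

lemma ae_rhoDyadic_pow_eq_one (k : ℕ) : ∀ᵐ z ∂rhoDyadic k, z ^ 2 ^ (k + 1) = 1 := by
  refine Measure.ae_smul_measure ?_ _
  rw [Measure.ae_sum_eq, Filter.eventually_iSup]
  exact fun j => by simpa [ae_dirac_eq] using rhoDyadic_pt_pow_eq_one k j

lemma lintegral_rhoDyadic_pow_sub_one_eq_zero {k n : ℕ} (hk : k < n) :
    ∫⁻ z, ENNReal.ofReal (‖z ^ 2 ^ n - 1‖ ^ 2) ∂rhoDyadic k = 0 := by
  obtain ⟨d, hd⟩ := Nat.pow_dvd_pow 2 (Nat.succ_le_of_lt hk)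
  refine (lintegral_congr_ae ((ae_rhoDyadic_pow_eq_one k).mono fun z hz => ?_)).trans
    lintegral_zero
  simp [hd, pow_mul, hz]

lemma lintegral_rhoDyadic_pow_sub_one_le (k m : ℕ) :
    ∫⁻ z, ENNReal.ofReal (‖z ^ m - 1‖ ^ 2) ∂rhoDyadic k ≤ ENNReal.ofReal 4 := by
  refine (lintegral_mono_ae ((ae_rhoDyadic_pow_eq_one k).mono fun z hz => ?_)).trans
    (by simp : ∫⁻ _, ENNReal.ofReal 4 ∂rhoDyadic k ≤ ENNReal.ofReal 4)
  have hz1 : ‖z‖ = 1 := norm_eq_one_of_pow_eq_one hz (by positivity)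
  have h2 : ‖z ^ m - 1‖ ≤ 2 := (norm_sub_le _ _).trans (by simp [hz1]; norm_num)
  gcongr
  nlinarith [norm_nonneg (z ^ m - 1)]

theorem stmt2 (a : ℕ → ℝ) (ha : ∀ k, 0 ≤ a k) (hsum : ∑' k : ℕ, a k = 1)
    (n : ℕ) :
    szegoE2 (Measure.sum fun k : ℕ => ENNReal.ofReal (a k) • rhoDyadic k) (2 ^ n)
      ≤ 4 * ∑' k : ℕ, a (n + k) := by
  set ρ := Measure.sum fun k : ℕ => ENNReal.ofReal (a k) • rhoDyadic k
  -- a non-summable `a` would have `∑' k, a k = 0`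
  have ha_summable : Summable a := by
    by_contra h
    simp [tsum_eq_zero_of_not_summable h] at hsum
  have hQ := szegoE2_le_integral ρ (monic_X_pow_sub_C (1 : ℂ) (pow_ne_zero n two_ne_zero))
  rw [natDegree_X_pow_sub_C] at hQ
  calc szegoE2 ρ (2 ^ n) ≤ ∫ z, ‖z ^ 2 ^ n - 1‖ ^ 2 ∂ρ := by simpa using hQ
    _ ≤ 4 * ∑' k : ℕ, a (n + k) := by
        rw [integral_eq_lintegral_of_nonneg_ae (ae_of_all _ fun z => by positivity) (by fun_prop)]
        refine ENNReal.toReal_le_of_le_ofReal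
          (mul_nonneg (by norm_num) (tsum_nonneg fun k => ha _)) ?_
        calc _ ≤ ENNReal.ofReal 4 * ∑' k, ENNReal.ofReal (a (n + k)) :=
              lintegral_sum_smul_le_mul_tsum_tail _ _ _
                (fun k hk => lintegral_rhoDyadic_pow_sub_one_eq_zero hk)
                (fun k => lintegral_rhoDyadic_pow_sub_one_le k _)
          _ = ENNReal.ofReal (4 * ∑' k, a (n + k)) := by
              rw [ENNReal.ofReal_mul (by norm_num), ENNReal.ofReal_tsum_of_nonneg (fun k => ha _)
                (ha_summable.comp_injective (add_right_injective n))]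
end

section
/- (Halász) For every positive integer d, there exists a polynomial H_d of degree at most d with complex coefficients such that H_d(0) = 1, H_d(1) = 0, and |H_d(z)| ≤ 1 + 2/d for all z on the unit circle. -/
/-!
The extremal polynomial is the first entry of a paraunitary lattice: starting from `(1, 0)`,
apply `d + 1` steps `(u, v) ↦ (c u - s z v, s u + c z v)` with rotation angles
`t, …, t, π/2 - d t`. Each step is a rotation composed with `v ↦ z v`, so `|u|² + |v|² = 1` on
the unit circle; at `z = 1` the steps compose to rotation by the total angle `π/2`, so `u(1) = 0`;
and `u(0) = sin (d t) cos t ^ d`. By the intermediate value theorem `t` can be chosen with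
`u(0) = d / (d + 2)`, and `H = (1 + 2/d) u` works.
-/

open Polynomial Real

theorem Complex.normSq_rotate (c s : ℝ) (h : c ^ 2 + s ^ 2 = 1) (a b : ℂ) :
    Complex.normSq (c * a - s * b) + Complex.normSq (s * a + c * b) =
      Complex.normSq a + Complex.normSq b := by
  simp only [Complex.normSq_apply, Complex.sub_re, Complex.sub_im, Complex.add_re,
    Complex.add_im, Complex.mul_re, Complex.mul_im, Complex.ofReal_re, Complex.ofReal_im]
  linear_combination (a.re * a.re + a.im * a.im + b.re * b.re + b.im * b.im) * h

namespace Halasz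

noncomputable def step (θ : ℝ) (w : ℂ[X] × ℂ[X]) : ℂ[X] × ℂ[X] :=
  (C (cos θ : ℂ) * w.1 - C (sin θ : ℂ) * (X * w.2),
   C (sin θ : ℂ) * w.1 + C (cos θ : ℂ) * (X * w.2))

noncomputable def lattice : List ℝ → ℂ[X] × ℂ[X]
  | [] => (1, 0)
  | θ :: θs => step θ (lattice θs)

-- Bounding `X * v` rather than `v` avoids the truncated `0 - 1` at the empty list.
theorem natDegree_lattice_le (θs : List ℝ) :
    (lattice θs).1.natDegree ≤ θs.length - 1 ∧ (X * (lattice θs).2).natDegree ≤ θs.length := by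
  induction θs with
  | nil => simp [lattice]
  | cons θ θs ih =>
    have hu (c : ℂ) : (C c * (lattice θs).1).natDegree ≤ θs.length :=
      (natDegree_C_mul_le _ _).trans (ih.1.trans (Nat.sub_le _ _))
    have hXv (c : ℂ) : (C c * (X * (lattice θs).2)).natDegree ≤ θs.length :=
      (natDegree_C_mul_le _ _).trans ih.2
    simp only [lattice, step, List.length_cons, Nat.add_sub_cancel]
    refine ⟨(natDegree_sub_le _ _).trans (max_le (hu _) (hXv _)), natDegree_mul_le.trans ?_⟩
    have := natDegree_X_le (R := ℂ)
    have := (natDegree_add_le _ _).trans (max_le (hu (sin θ)) (hXv (cos θ)))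
    omega

theorem eval_zero_lattice_fst (θs : List ℝ) :
    (lattice θs).1.eval 0 = ((θs.map cos).prod : ℝ) := by
  induction θs with
  | nil => simp [lattice]
  | cons θ θs ih => simp [lattice, step, ih]

theorem eval_one_lattice (θs : List ℝ) :
    (lattice θs).1.eval 1 = (cos θs.sum : ℂ) ∧
      (lattice θs).2.eval 1 = (sin θs.sum : ℂ) := by
  induction θs with
  | nil => simp [lattice]
  | cons θ θs ih =>
    simp only [lattice, step, eval_sub, eval_add, eval_mul, eval_C, eval_X, one_mul, ih,
      List.sum_cons, cos_add, sin_add]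
    push_cast
    constructor <;> ring

theorem normSq_eval_lattice {z : ℂ} (hz : ‖z‖ = 1) (θs : List ℝ) :
    Complex.normSq ((lattice θs).1.eval z) + Complex.normSq ((lattice θs).2.eval z) = 1 := by
  induction θs with
  | nil => simp [lattice]
  | cons θ θs ih =>
    simp only [lattice, step, eval_sub, eval_add, eval_mul, eval_C, eval_X]
    rw [Complex.normSq_rotate _ _ (cos_sq_add_sin_sq θ), Complex.normSq_mul,
      Complex.normSq_eq_norm_sq z, hz, one_pow, one_mul, ih]

theorem norm_eval_lattice_fst_le_one {z : ℂ} (hz : ‖z‖ = 1) (θs : List ℝ) :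
    ‖(lattice θs).1.eval z‖ ≤ 1 := by
  have h := normSq_eval_lattice hz θs
  rw [Complex.normSq_eq_norm_sq, Complex.normSq_eq_norm_sq] at h
  nlinarith [norm_nonneg ((lattice θs).1.eval z), sq_nonneg ‖(lattice θs).2.eval z‖]

end Halasz

theorem one_sub_mul_sq_div_two_le_cos_pow {x : ℝ} (hx : x ^ 2 ≤ 2) (n : ℕ) :
    1 - n * (x ^ 2 / 2) ≤ cos x ^ n := by
  calc 1 - n * (x ^ 2 / 2) = 1 + n * -(x ^ 2 / 2) := by ring
    _ ≤ (1 + -(x ^ 2 / 2)) ^ n := one_add_mul_le_pow (by linarith) n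
    _ ≤ cos x ^ n :=
      pow_le_pow_left₀ (by linarith) (by linarith [one_sub_sq_div_two_le_cos (x := x)]) n

theorem exists_sin_mul_mul_cos_pow_eq (d : ℕ) (hd : 1 ≤ d) :
    ∃ t : ℝ, sin (d * t) * cos t ^ d = d / (d + 2) := by
  have hd' : (1 : ℝ) ≤ d := by exact_mod_cast hd
  set x := π / (2 * (d + 1)) with hx
  have hx_pos : 0 < x := by positivity
  have hfx : sin (d * x) * cos x ^ d = cos x ^ (d + 1) := by
    rw [show d * x = π / 2 - x by rw [hx]; field_simp; ring, sin_pi_div_two_sub, pow_succ']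
  have hx_sq : (d + 1 : ℝ) * (x ^ 2 / 2) = π ^ 2 / (8 * (d + 1)) := by
    rw [hx]; field_simp; ring
  have hpi_sq : π ^ 2 < 9.9225 := by nlinarith [pi_lt_d2, pi_pos]
  have hx_le : x ^ 2 ≤ 2 := by
    have : x ^ 2 / 2 ≤ 1 := by
      rw [← mul_le_mul_iff_of_pos_left (by positivity : (0 : ℝ) < d + 1), hx_sq,
        div_le_iff₀ (by positivity)]
      nlinarith
    linarith
  have hbound : (d : ℝ) / (d + 2) ≤ cos x ^ (d + 1) := by
    have hcos := one_sub_mul_sq_div_two_le_cos_pow hx_le (d + 1)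
    push_cast at hcos
    rw [hx_sq] at hcos
    have : (d : ℝ) / (d + 2) ≤ 1 - π ^ 2 / (8 * (d + 1)) := by
      rw [div_le_iff₀ (by positivity), sub_mul, div_mul_eq_mul_div, le_sub_iff_add_le,
        ← le_sub_iff_add_le', div_le_iff₀ (by positivity)]
      nlinarith
    linarith
  have hcont : ContinuousOn (fun t => sin (d * t) * cos t ^ d) (Set.Icc 0 x) := by fun_prop
  obtain ⟨t, -, ht⟩ := intermediate_value_Icc hx_pos.le hcont
    ⟨by simp only [mul_zero, sin_zero, zero_mul]; positivity, hfx ▸ hbound⟩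
  exact ⟨t, ht⟩

/-- Halász's lemma: for every `d ≥ 1` there is a polynomial `H` of degree at most `d`
with `H(0) = 1`, `H(1) = 0`, and `|H| ≤ 1 + 2/d` on the unit circle. -/
theorem stmt6 (d : ℕ) (hd : 1 ≤ d) :
    ∃ H : Polynomial ℂ, H.natDegree ≤ d ∧ H.eval 0 = 1 ∧ H.eval 1 = 0 ∧
      ∀ z ∈ Metric.sphere (0 : ℂ) 1, ‖H.eval z‖ ≤ 1 + 2 / d := by
  obtain ⟨t, ht⟩ := exists_sin_mul_mul_cos_pow_eq d hd
  set θs := (π / 2 - d * t) :: List.replicate d t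
  have hd' : (0 : ℝ) < d := by exact_mod_cast hd
  refine ⟨C ((1 + 2 / d : ℝ) : ℂ) * (Halasz.lattice θs).1, ?_, ?_, ?_, ?_⟩
  · exact (natDegree_C_mul_le _ _).trans (by simpa [θs] using (Halasz.natDegree_lattice_le θs).1)
  · have h0 : (1 + 2 / d : ℝ) * (sin (d * t) * cos t ^ d) = 1 := by
      rw [ht]; field_simp
    simp only [eval_mul, eval_C, Halasz.eval_zero_lattice_fst, θs, List.map_cons,
      List.map_replicate, List.prod_cons, List.prod_replicate, cos_pi_div_two_sub]
    exact_mod_cast h0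
  · have hsum : θs.sum = π / 2 := by simp [θs]
    simp [(Halasz.eval_one_lattice θs).1, hsum]
  · intro z hz
    rw [eval_mul, eval_C, norm_mul, Complex.norm_real, Real.norm_of_nonneg (by positivity)]
    exact mul_le_of_le_one_right (by positivity)
      (Halasz.norm_eval_lattice_fst_le_one (mem_sphere_zero_iff_norm.mp hz) θs)
end

section
/- Let ρ be a probability measure on 𝕋, n ≥ 3 an integer, and Ω ≥ 16 n log n. If e_n(ρ) ≤ e^{-Ω}, then there exist p ≤ n closed arcs I_1,...,I_p on 𝕋 such that Σ_{ℓ=1}^p 1/log(1/|I_ℓ|) ≤ 8 n log n / Ω and ρ(𝕋 \ ∪_ℓ I_ℓ) ≤ e^{-Ω}. -/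
/-!
Take a monic `q` of degree `n` with `∫ |q|² dρ < 2 e^{-2Ω}` and apply the Boutroux–Cartan lemma to
its roots with radii `r_k = exp (-Ω / (8 k log n)) / 16`. Off the disks `B(c_j, 2 r_{λ_j})` we get
`|q| ≥ ∏ r_k`, and `∑_{k ≤ n} 1/k ≤ 1 + log n` makes `(∏ r_k)² ≥ 2 e^{-Ω}`, so by Chebyshev the
circle outside the disks has `ρ`-mass at most `e^{-Ω}`. A disk of radius `ℓ/8` meets the circle
inside an arc of length `ℓ`; for `ℓ = 16 r_{λ_j}` one has `1 / log (1/ℓ) = 8 λ_j log n / Ω`, and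
these sum to `8 n log n / Ω` because `∑ λ_j = n`.
-/

open MeasureTheory Complex Polynomial

/-- The Szegő minimum `e_n(ρ)`. -/
noncomputable def szegoE (ρ : Measure ℂ) (n : ℕ) : ℝ :=
  Real.sqrt (szegoE2 ρ n)

/-- `I` is a closed arc of (arc-)length `len` on the unit circle. -/
def IsClosedArc (I : Set ℂ) (len : ℝ) : Prop :=
  ∃ a : ℝ, I = (fun θ : ℝ => Complex.exp (θ * Complex.I)) '' Set.Icc a (a + len)

theorem Multiset.exists_le_card_eq {α : Type*} {s : Multiset α} {n : ℕ} (h : n ≤ card s) :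
    ∃ t ≤ s, card t = n := by
  have : 0 < card (powersetCard n s) := by
    rw [card_powersetCard]; exact Nat.choose_pos h
  obtain ⟨t, ht⟩ := card_pos_iff_exists_mem.mp this
  exact ⟨t, (mem_powersetCard.mp ht).1, (mem_powersetCard.mp ht).2⟩

theorem prod_Icc_le_prod_of_countP_lt (r : ℕ → ℝ) (hr : ∀ k, 0 < r k) (D : Multiset ℝ)
    (hD : ∀ k, 1 ≤ k → D.countP (· ≤ r k) < k) :
    ∏ k ∈ Finset.Icc 1 (Multiset.card D), r k ≤ D.prod := by
  induction hm : Multiset.card D generalizing D with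
  | zero => simp [Multiset.card_eq_zero.mp hm]
  | succ m ih =>
    obtain ⟨d, hd, hdmax⟩ := Multiset.exists_max_image id (s := D) (by rintro rfl; simp at hm)
    have hrd : r (m + 1) < d := by
      by_contra! h
      have hall : D.countP (· ≤ r (m + 1)) = Multiset.card D :=
        Multiset.countP_eq_card.mpr fun x hx => (hdmax x hx).trans h
      exact (hD (m + 1) (by omega)).ne (hall.trans hm)
    have hD' : ∀ k, 1 ≤ k → (D.erase d).countP (· ≤ r k) < k := fun k hk =>
      (Multiset.countP_le_of_le _ (Multiset.erase_le d D)).trans_lt (hD k hk)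
    have IH := ih (D.erase d) hD' (by rw [Multiset.card_erase_of_mem hd, hm]; rfl)
    rw [← Multiset.prod_erase hd, Finset.prod_Icc_succ_top (by omega), mul_comm d]
    exact mul_le_mul IH hrd.le (hr _).le ((Finset.prod_pos fun k _ => hr k).le.trans IH)

section Cartan

variable {α : Type*} [PseudoMetricSpace α] (r : ℕ → ℝ)

theorem exists_maximal_cluster (hr₁ : 0 ≤ r 1) {S : Multiset α} (hS : S ≠ 0) :
    ∃ l c, ∃ T ≤ S, 1 ≤ l ∧ Multiset.card T = l ∧ (∀ ζ ∈ T, dist c ζ ≤ r l) ∧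
      ∀ z k, 1 ≤ k → k ≤ S.countP (fun ζ => dist z ζ ≤ r k) → k ≤ l := by
  classical
  let P : ℕ → Prop := fun m => 1 ≤ m ∧ ∃ c, m ≤ S.countP (fun ζ => dist c ζ ≤ r m)
  have hP1 : P 1 := by
    obtain ⟨x, hx⟩ := Multiset.exists_mem_of_ne_zero hS
    exact ⟨le_rfl, x, Multiset.countP_pos.mpr ⟨x, hx, by simpa using hr₁⟩⟩
  set l := Nat.findGreatest P (Multiset.card S)
  obtain ⟨hl, c, hc⟩ : P l := Nat.findGreatest_spec (Multiset.card_pos.mpr hS) hP1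
  rw [Multiset.countP_eq_card_filter] at hc
  obtain ⟨T, hT, hTcard⟩ := Multiset.exists_le_card_eq hc
  refine ⟨l, c, T, hT.trans (Multiset.filter_le _ _), hl, hTcard,
    fun ζ hζ => (Multiset.mem_filter.mp (Multiset.mem_of_le hT hζ)).2, fun z k hk hzk => ?_⟩
  exact Nat.le_findGreatest (hzk.trans (Multiset.countP_le_card _ _)) ⟨hk, z, hzk⟩

theorem exists_cartan_disks (hr : MonotoneOn r (Set.Ici 1)) (hr₁ : 0 ≤ r 1) (S : Multiset α) :
    ∃ p ≤ Multiset.card S, ∃ (c : Fin p → α) (lam : Fin p → ℕ),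
      (∀ j, 1 ≤ lam j) ∧ ∑ j, lam j = Multiset.card S ∧
      ∀ z, (∀ j, 2 * r (lam j) < dist z (c j)) →
        ∀ k, 1 ≤ k → S.countP (fun ζ => dist z ζ ≤ r k) < k := by
  classical
  induction S using Multiset.strongInductionOn with
  | _ S ih =>
  rcases eq_or_ne S 0 with rfl | hS
  · exact ⟨0, le_rfl, Fin.elim0, Fin.elim0, fun j => j.elim0, by simp, fun _ _ k hk => by simpa⟩
  obtain ⟨l, c₁, T, hTS, hl, hTcard, hTc, hmax⟩ := exists_maximal_cluster r hr₁ hS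
  have hST : S - T + T = S := tsub_add_cancel_of_le hTS
  have hcard : Multiset.card (S - T) + l = Multiset.card S := by
    rw [← hTcard, ← Multiset.card_add, hST]
  obtain ⟨p, hp, c, lam, hlam, hsum, hfar⟩ := ih (S - T) <|
    lt_of_le_of_ne tsub_le_self fun h => by rw [h] at hcard; omega
  refine ⟨p + 1, by omega, Fin.cons c₁ c, Fin.cons l lam, Fin.cases hl hlam,
    by rw [Fin.sum_cons, hsum]; omega, fun z hz k hk => ?_⟩
  by_contra! hkS
  have hkl := hmax z k hk hkS
  -- `k ≤ l` by maximality of the cluster, so `z`, being `2 r l`-far from it, sees none of it.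
  have hzT : T.countP (fun ζ => dist z ζ ≤ r k) = 0 := by
    have hz₁ : 2 * r l < dist z c₁ := by simpa using hz 0
    refine Multiset.countP_eq_zero.mpr fun ζ hζ hzζ => hz₁.not_ge ?_
    calc dist z c₁ ≤ dist z ζ + dist c₁ ζ := dist_triangle_right _ _ _
      _ ≤ r k + r l := add_le_add hzζ (hTc ζ hζ)
      _ ≤ 2 * r l := by linarith [hr (Set.mem_Ici.mpr hk) (Set.mem_Ici.mpr hl) hkl]
  rw [← hST, Multiset.countP_add, hzT, add_zero] at hkS
  exact (hfar z (fun j => by simpa using hz j.succ) k hk).not_ge hkS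

theorem boutroux_cartan (hr : MonotoneOn r (Set.Ici 1)) (hr₀ : ∀ k, 0 < r k) (S : Multiset α) :
    ∃ p ≤ Multiset.card S, ∃ (c : Fin p → α) (lam : Fin p → ℕ),
      (∀ j, 1 ≤ lam j) ∧ ∑ j, lam j = Multiset.card S ∧
      ∀ z, (∀ j, 2 * r (lam j) < dist z (c j)) →
        ∏ k ∈ Finset.Icc 1 (Multiset.card S), r k ≤ (S.map (dist z)).prod := by
  obtain ⟨p, hp, c, lam, hlam, hsum, hfar⟩ := exists_cartan_disks r hr (hr₀ 1).le S
  refine ⟨p, hp, c, lam, hlam, hsum, fun z hz => ?_⟩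
  have := prod_Icc_le_prod_of_countP_lt r hr₀ (S.map (dist z)) fun k hk => by
    rw [Multiset.countP_map, ← Multiset.countP_eq_card_filter]; exact hfar z hz k hk
  rwa [Multiset.card_map] at this

end Cartan

theorem Polynomial.Monic.norm_eval_eq_prod_dist_roots {q : ℂ[X]} (hq : q.Monic) (z : ℂ) :
    ‖q.eval z‖ = (q.roots.map (dist z)).prod := by
  rw [(IsAlgClosed.splits q).eval_eq_prod_roots_of_monic hq]
  exact (map_multiset_prod (normHom : ℂ →*₀ ℝ) _).trans (by simp [dist_eq_norm])

theorem Polynomial.Monic.exists_cartan_disks {q : ℂ[X]} (hq : q.Monic) {r : ℕ → ℝ}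
    (hr : MonotoneOn r (Set.Ici 1)) (hr₀ : ∀ k, 0 < r k) :
    ∃ p ≤ q.natDegree, ∃ (c : Fin p → ℂ) (lam : Fin p → ℕ),
      (∀ j, 1 ≤ lam j) ∧ ∑ j, lam j = q.natDegree ∧
      ∀ z, (∀ j, 2 * r (lam j) < dist z (c j)) →
        ∏ k ∈ Finset.Icc 1 q.natDegree, r k ≤ ‖q.eval z‖ := by
  rw [(IsAlgClosed.splits q).natDegree_eq_card_roots]
  simp only [hq.norm_eval_eq_prod_dist_roots]
  exact boutroux_cartan r hr hr₀ q.roots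

theorem Complex.exp_arg_mul_I_of_norm_eq_one {u : ℂ} (hu : ‖u‖ = 1) : exp (arg u * I) = u := by
  simpa [hu] using norm_mul_exp_arg_mul_I u

theorem Complex.abs_arg_le_pi_div_two_mul_norm_sub_one {u : ℂ} (hu : ‖u‖ = 1) :
    |arg u| ≤ Real.pi / 2 * ‖u - 1‖ := by
  have hnorm : ‖u - 1‖ = 2 * |Real.sin (arg u / 2)| := by
    conv_lhs => rw [← exp_arg_mul_I_of_norm_eq_one hu, mul_comm]
    rw [norm_exp_I_mul_ofReal_sub_one, norm_mul, Real.norm_eq_abs, Real.norm_eq_abs, abs_two]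
  have hhalf : |arg u| / 2 ≤ Real.pi / 2 := by linarith [abs_arg_le_pi u]
  have hsin : 2 / Real.pi * (|arg u| / 2) ≤ |Real.sin (arg u / 2)| := by
    rw [Real.abs_sin_eq_sin_abs_of_abs_le_pi (by rw [abs_div, abs_two]; linarith [Real.pi_pos]),
      abs_div, abs_two]
    exact Real.mul_le_sin (by positivity) hhalf
  rw [hnorm]
  field_simp at hsin ⊢
  linarith

theorem exists_isClosedArc_superset_sphere_inter_closedBall (c : ℂ) (ℓ : ℝ) :
    ∃ I, IsClosedArc I ℓ ∧ Metric.sphere 0 1 ∩ Metric.closedBall c (ℓ / 8) ⊆ I := by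
  rcases (Metric.sphere (0 : ℂ) 1 ∩ Metric.closedBall c (ℓ / 8)).eq_empty_or_nonempty
    with h | ⟨w, hw, hwc⟩
  · exact ⟨_, ⟨0, rfl⟩, h.subset.trans (Set.empty_subset _)⟩
  refine ⟨_, ⟨arg w - ℓ / 2, rfl⟩, fun z ⟨hz, hzc⟩ => ?_⟩
  rw [mem_sphere_zero_iff_norm] at hw hz
  have hw0 : w ≠ 0 := norm_ne_zero_iff.mp (by rw [hw]; exact one_ne_zero)
  have hu : ‖z / w‖ = 1 := by rw [norm_div, hz, hw, div_one]
  have hzw : ‖z / w - 1‖ ≤ ℓ / 4 := by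
    rw [div_sub_one hw0, norm_div, hw, div_one, ← dist_eq_norm]
    linarith [dist_triangle_right z w c, Metric.mem_closedBall.mp hzc,
      Metric.mem_closedBall.mp hwc]
  have harg : |arg (z / w)| ≤ ℓ / 2 := by
    nlinarith [abs_arg_le_pi_div_two_mul_norm_sub_one hu, Real.pi_le_four,
      norm_nonneg (z / w - 1)]
  refine ⟨arg w + arg (z / w), ⟨by linarith [abs_le.mp harg], by linarith [abs_le.mp harg]⟩, ?_⟩
  push_cast
  rw [add_mul, exp_add, exp_arg_mul_I_of_norm_eq_one hw, exp_arg_mul_I_of_norm_eq_one hu,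
    mul_div_cancel₀ _ hw0]

theorem exists_monic_integral_lt_of_szegoE2_lt {ρ : Measure ℂ} {n : ℕ} {b : ℝ}
    (h : szegoE2 ρ n < b) :
    ∃ q : ℂ[X], q.Monic ∧ q.natDegree = n ∧ ∫ z, ‖q.eval z‖ ^ 2 ∂ρ < b := by
  have hne : {x | ∃ q : ℂ[X], q.Monic ∧ q.natDegree = n ∧ x = ∫ z, ‖q.eval z‖ ^ 2 ∂ρ}.Nonempty :=
    ⟨_, X ^ n, monic_X_pow n, natDegree_X_pow n, rfl⟩
  obtain ⟨_, ⟨q, hq, hdeg, rfl⟩, hlt⟩ := exists_lt_of_csInf_lt hne h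
  exact ⟨q, hq, hdeg, hlt⟩

theorem szegoE2_le_sq_of_szegoE_le {ρ : Measure ℂ} {n : ℕ} {E : ℝ} (h : szegoE ρ n ≤ E) :
    szegoE2 ρ n ≤ E ^ 2 :=
  (Real.sqrt_le_iff.mp h).2

theorem integrable_norm_eval_sq {ρ : Measure ℂ} [IsFiniteMeasure ρ] {K : Set ℂ}
    (hK : IsCompact K) (hsupp : ρ Kᶜ = 0) (q : ℂ[X]) :
    Integrable (fun z => ‖q.eval z‖ ^ 2) ρ := by
  rw [← Measure.restrict_eq_self_of_ae_mem (ae_iff.mpr hsupp)]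
  exact (q.continuous.norm.pow 2).continuousOn.integrableOn_compact hK

theorem measure_le_norm_le_ofReal_of_integral_sq_le {α E : Type*} [MeasurableSpace α]
    [NormedAddCommGroup E] {μ : Measure α} [IsFiniteMeasure μ] {f : α → E}
    (hf : Integrable (fun x => ‖f x‖ ^ 2) μ) {t ε : ℝ} (ht : 0 < t)
    (h : ∫ x, ‖f x‖ ^ 2 ∂μ ≤ t ^ 2 * ε) :
    μ {x | t ≤ ‖f x‖} ≤ ENNReal.ofReal ε := by
  have hsub : {x | t ≤ ‖f x‖} ⊆ {x | t ^ 2 ≤ ‖f x‖ ^ 2} := fun x hx =>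
    pow_le_pow_left₀ ht.le hx 2
  have hmarkov := mul_meas_ge_le_integral_of_nonneg (Filter.Eventually.of_forall
    fun x => sq_nonneg ‖f x‖) hf (t ^ 2)
  have hreal : μ.real {x | t ^ 2 ≤ ‖f x‖ ^ 2} ≤ ε :=
    le_of_mul_le_mul_left (hmarkov.trans h) (by positivity)
  calc μ {x | t ≤ ‖f x‖} ≤ μ {x | t ^ 2 ≤ ‖f x‖ ^ 2} := measure_mono hsub
    _ = ENNReal.ofReal (μ.real {x | t ^ 2 ≤ ‖f x‖ ^ 2}) :=
        (ENNReal.ofReal_toReal (measure_ne_top _ _)).symm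
    _ ≤ ENNReal.ofReal ε := ENNReal.ofReal_le_ofReal hreal

theorem prod_Icc_exp_neg_div_eq (n : ℕ) (A : ℝ) :
    ∏ k ∈ Finset.Icc 1 n, Real.exp (-(A / k)) / 16 =
      Real.exp (-(A * ∑ k ∈ Finset.Icc 1 n, (1 / k : ℝ))) / 16 ^ n := by
  rw [Finset.prod_div_distrib, ← Real.exp_sum, Finset.prod_const, Nat.card_Icc,
    Nat.add_sub_cancel, Finset.mul_sum, ← Finset.sum_neg_distrib]
  simp [div_eq_mul_inv]

theorem one_lt_log_of_three_le {n : ℕ} (hn : 3 ≤ n) : 1 < Real.log n := by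
  rw [Real.lt_log_iff_exp_lt (by positivity)]
  have : (3 : ℝ) ≤ n := by exact_mod_cast hn
  linarith [Real.exp_one_lt_d9]

theorem two_mul_pow_le_exp {n : ℕ} (hn : 1 ≤ n) : 2 * 256 ^ n ≤ Real.exp (8 * n) := by
  have h512 : (512 : ℝ) ≤ Real.exp 8 := by
    calc (512 : ℝ) ≤ 2.7 ^ 8 := by norm_num
      _ ≤ Real.exp 1 ^ 8 := pow_le_pow_left₀ (by norm_num) (by linarith [Real.exp_one_gt_d9]) 8
      _ = Real.exp 8 := by rw [← Real.exp_nat_mul]; norm_num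
  calc (2 : ℝ) * 256 ^ n ≤ 2 ^ n * 256 ^ n := by
        gcongr; exact le_self_pow₀ (by norm_num) (by omega)
    _ = 512 ^ n := by rw [← mul_pow]; norm_num
    _ ≤ Real.exp 8 ^ n := pow_le_pow_left₀ (by norm_num) h512 n
    _ = Real.exp (8 * n) := by rw [← Real.exp_nat_mul, mul_comm]

/-- The arc length `|I_j|` for a Cartan disk with `λ_j = k`; the Cartan radius is
`r_k = cartanLength Ω L k / 16`. -/
noncomputable def cartanLength (Ω L : ℝ) (k : ℕ) : ℝ :=
  Real.exp (-(Ω / (8 * k * L)))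

section cartanLength

variable {Ω L : ℝ}

theorem cartanLength_pos (k : ℕ) : 0 < cartanLength Ω L k :=
  Real.exp_pos _

theorem cartanLength_lt_one (hΩ : 0 < Ω) (hL : 0 < L) {k : ℕ} (hk : 1 ≤ k) :
    cartanLength Ω L k < 1 := by
  have : (1 : ℝ) ≤ k := by exact_mod_cast hk
  rw [cartanLength, Real.exp_lt_one_iff, neg_lt_zero]
  positivity

theorem monotoneOn_cartanLength (hΩ : 0 ≤ Ω) (hL : 0 < L) :
    MonotoneOn (cartanLength Ω L) (Set.Ici 1) := fun a ha b _ hab => by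
  have ha : (1 : ℝ) ≤ a := by exact_mod_cast ha
  unfold cartanLength
  gcongr

theorem one_div_log_one_div_cartanLength (k : ℕ) :
    1 / Real.log (1 / cartanLength Ω L k) = 8 * k * L / Ω := by
  simp only [cartanLength, Real.exp_neg, one_div, inv_inv, Real.log_exp, inv_div]

theorem two_mul_exp_neg_le_sq_prod_cartanLength {n : ℕ} (hn : 3 ≤ n)
    (hΩ : 16 * n * Real.log n ≤ Ω) :
    2 * Real.exp (-Ω) ≤ (∏ k ∈ Finset.Icc 1 n, cartanLength Ω (Real.log n) k / 16) ^ 2 := by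
  set L := Real.log n
  have hL : 1 < L := one_lt_log_of_three_le hn
  set A := Ω / (8 * L)
  have hΩ₀ : 0 ≤ Ω := by nlinarith [(Nat.cast_nonneg n : (0 : ℝ) ≤ n)]
  have hA : 0 ≤ A := by positivity
  have hprod : ∏ k ∈ Finset.Icc 1 n, cartanLength Ω L k / 16 =
      Real.exp (-(A * ∑ k ∈ Finset.Icc 1 n, (1 / k : ℝ))) / 16 ^ n := by
    rw [← prod_Icc_exp_neg_div_eq]
    refine Finset.prod_congr rfl fun k _ => ?_
    simp only [cartanLength, A]
    field_simp
  have hharm : A * ∑ k ∈ Finset.Icc 1 n, (1 / k : ℝ) ≤ Ω / 4 := by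
    have h := harmonic_le_one_add_log n
    rw [harmonic_eq_sum_Icc] at h
    push_cast at h
    calc A * ∑ k ∈ Finset.Icc 1 n, (1 / k : ℝ) ≤ A * (1 + L) := by
          gcongr; simpa [one_div] using h
      _ ≤ Ω / 4 := by
          unfold A
          rw [div_mul_eq_mul_div, div_le_div_iff₀ (by positivity) (by norm_num)]
          nlinarith [mul_le_mul_of_nonneg_left hL.le hΩ₀]
  have hexp : 2 * 256 ^ n ≤ Real.exp (Ω / 2) :=
    (two_mul_pow_le_exp (by omega)).trans (Real.exp_le_exp.mpr (by nlinarith))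
  rw [hprod, div_pow, ← Real.exp_nat_mul, le_div_iff₀ (by positivity)]
  calc 2 * Real.exp (-Ω) * (16 ^ n) ^ 2 = 2 * 256 ^ n * Real.exp (-Ω) := by
        rw [← pow_mul, mul_comm n 2, pow_mul]; ring
    _ ≤ Real.exp (Ω / 2) * Real.exp (-Ω) := by gcongr
    _ = Real.exp (-(Ω / 2)) := by rw [← Real.exp_add]; ring_nf
    _ ≤ _ := Real.exp_le_exp.mpr (by push_cast; linarith)

end cartanLength

theorem stmt8 (ρ : Measure ℂ) [IsProbabilityMeasure ρ]
    (hsupp : ρ (Metric.sphere (0 : ℂ) 1)ᶜ = 0)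
    (n : ℕ) (hn : 3 ≤ n) (Ω : ℝ) (hΩ : 16 * n * Real.log n ≤ Ω)
    (he : szegoE ρ n ≤ Real.exp (-Ω)) :
    ∃ (p : ℕ) (_ : p ≤ n) (I : Fin p → Set ℂ) (len : Fin p → ℝ),
      (∀ ℓ, IsClosedArc (I ℓ) (len ℓ) ∧ 0 < len ℓ ∧ len ℓ < 1) ∧
      (∑ ℓ, 1 / Real.log (1 / len ℓ)) ≤ 8 * n * Real.log n / Ω ∧
      ρ (Metric.sphere (0 : ℂ) 1 \ ⋃ ℓ, I ℓ) ≤ ENNReal.ofReal (Real.exp (-Ω)) := by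
  have hL : 0 < Real.log n := one_pos.trans (one_lt_log_of_three_le hn)
  have hΩ₀ : 0 < Ω := lt_of_lt_of_le (by positivity) hΩ
  set len := cartanLength Ω (Real.log n)
  set r : ℕ → ℝ := fun k => len k / 16
  obtain ⟨q, hq, hqdeg, hqint⟩ :=
    exists_monic_integral_lt_of_szegoE2_lt (b := 2 * Real.exp (-Ω) ^ 2)
      ((szegoE2_le_sq_of_szegoE_le he).trans_lt (by nlinarith [Real.exp_pos (-Ω)]))
  have hr₀ : ∀ k, 0 < r k := fun k => div_pos (cartanLength_pos k) (by norm_num)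
  obtain ⟨p, hp, c, lam, hlam, hsum, hfar⟩ := hq.exists_cartan_disks
    (fun a ha b hb hab => div_le_div_of_nonneg_right
      (monotoneOn_cartanLength hΩ₀.le hL ha hb hab) (by norm_num)) hr₀
  rw [hqdeg] at hp hsum hfar
  choose I hI hIc using fun j =>
    exists_isClosedArc_superset_sphere_inter_closedBall (c j) (len (lam j))
  refine ⟨p, hp, I, fun j => len (lam j),
    fun j => ⟨hI j, cartanLength_pos _, cartanLength_lt_one hΩ₀ hL (hlam j)⟩, ?_, ?_⟩
  · simp only [len, one_div_log_one_div_cartanLength]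
    rw [← Finset.sum_div, ← Finset.sum_mul, ← Finset.mul_sum, ← Nat.cast_sum, hsum]
  have hcover : Metric.sphere 0 1 \ ⋃ j, I j ⊆
      {z | ∏ k ∈ Finset.Icc 1 n, r k ≤ ‖q.eval z‖} := by
    rintro z ⟨hz, hzI⟩
    refine hfar z fun j => not_le.mp fun hzc => hzI (Set.mem_iUnion.mpr ⟨j, hIc j ⟨hz, ?_⟩⟩)
    exact Metric.mem_closedBall.mpr (by linarith)
  refine (measure_mono hcover).trans (measure_le_norm_le_ofReal_of_integral_sq_le
    (integrable_norm_eval_sq (isCompact_sphere 0 1) hsupp q) (Finset.prod_pos fun k _ => hr₀ k) ?_)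
  nlinarith [two_mul_exp_neg_le_sq_prod_cartanLength hn hΩ, Real.exp_pos (-Ω)]
end

section
/- For −1 ≤ α ≤ 1, the integral (1/2π) ∫_{−π}^{π} log(1 + α cos θ) dθ equals log((1 + √(1−α²))/2). -/
/-!
Write `1 + α cos θ = ρ² + a² - 2ρa cos θ = ‖ρ e^{iθ} - a‖²` with `ρ² = (1 + √(1 - α²))/2` and
`a = -α/(2ρ)`. Since `|a| ≤ ρ`, the mean value of `log ‖z - a‖` over the circle `|z| = ρ` is
`log ρ` (Mathlib's `circleAverage_log_norm_sub_const_of_mem_closedBall`, which also covers a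
zero `a` on the circle, i.e. `α = ±1`), so the average of `log (1 + α cos θ)` is `log ρ²`.
-/

open Real

theorem norm_circleMap_zero_sub_ofReal_sq (ρ a θ : ℝ) :
    ‖circleMap 0 ρ θ - a‖ ^ 2 = ρ ^ 2 + a ^ 2 - 2 * ρ * a * cos θ := by
  rw [← Complex.normSq_eq_norm_sq, Complex.normSq_apply]
  simp [circleMap, Complex.exp_ofReal_mul_I_re, Complex.exp_ofReal_mul_I_im]
  linear_combination ρ ^ 2 * sin_sq_add_cos_sq θ

theorem integral_log_sq_add_sq_sub_mul_cos {ρ a : ℝ} (h : |a| ≤ |ρ|) :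
    ∫ θ in (-π)..π, log (ρ ^ 2 + a ^ 2 - 2 * ρ * a * cos θ) = 2 * π * log (ρ ^ 2) := by
  have hper : Function.Periodic (fun θ ↦ log (ρ ^ 2 + a ^ 2 - 2 * ρ * a * cos θ)) (2 * π) :=
    fun θ ↦ by simp only [cos_add_two_pi]
  have hmean : circleAverage (log ‖· - (a : ℂ)‖) 0 ρ = log ρ :=
    circleAverage_log_norm_sub_const_of_mem_closedBall (by simpa using h)
  calc ∫ θ in (-π)..π, log (ρ ^ 2 + a ^ 2 - 2 * ρ * a * cos θ)
      = ∫ θ in 0..2 * π, log (ρ ^ 2 + a ^ 2 - 2 * ρ * a * cos θ) := by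
        have := hper.intervalIntegral_add_eq (-π) 0
        rwa [zero_add, show -π + 2 * π = π by ring] at this
    _ = ∫ θ in 0..2 * π, 2 * log ‖circleMap 0 ρ θ - a‖ := by
        simp only [← norm_circleMap_zero_sub_ofReal_sq, log_pow, Nat.cast_ofNat]
    _ = 2 * π * log (ρ ^ 2) := by
        rw [intervalIntegral.integral_const_mul, log_pow, ← hmean, circleAverage_def,
          smul_eq_mul]
        field_simp
        push_cast
        ring

theorem stmt14 (α : ℝ) (hα : α ∈ Set.Icc (-1 : ℝ) 1) :
    (1 / (2 * π)) * ∫ θ in (-π)..π, Real.log (1 + α * Real.cos θ) =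
      Real.log ((1 + Real.sqrt (1 - α ^ 2)) / 2) := by
  have hs : √(1 - α ^ 2) ^ 2 = 1 - α ^ 2 := sq_sqrt (by nlinarith [hα.1, hα.2])
  set ρ := √((1 + √(1 - α ^ 2)) / 2)
  have hρ : ρ ^ 2 = (1 + √(1 - α ^ 2)) / 2 := sq_sqrt (by positivity)
  have hρ_pos : 0 < ρ := sqrt_pos.2 (by positivity)
  set a := -α / (2 * ρ) with ha
  have ha_le : |a| ≤ |ρ| := by
    rw [← sq_le_sq, ha, div_pow, div_le_iff₀ (by positivity)]
    nlinarith [sqrt_nonneg (1 - α ^ 2)]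
  have hcoeff (θ : ℝ) : 1 + α * cos θ = ρ ^ 2 + a ^ 2 - 2 * ρ * a * cos θ := by
    rw [ha]
    field_simp
    linear_combination (4 - 4 * ρ ^ 2 - 2 * (1 + √(1 - α ^ 2))) * hρ - hs
  simp_rw [hcoeff, integral_log_sq_add_sq_sub_mul_cos ha_le, hρ]
  field_simp
end

section
/- Let β, β' ∈ (0,1) and let ψ be a nonnegative nondecreasing integrable function on (−β, β') with ∫_{−β}^{β'} ψ(t) dt ≤ 1. Then ∫_{−β}^{β'} ψ(t) log(1/|t|) dt ≤ 3 log(1/(β β')) + 2. -/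
/-!
Split the integral at `0`. For `t < 0`, monotonicity and `∫₀^β' ψ ≤ 1` give `ψ t ≤ 1 / β'`.
On `(-β, 0)` the weight `log (1 / |t|)` is at most `log (1 / c)` outside `(-c, 0)`, and inside
`ψ ≤ 1 / β'` pays for the excess `∫_{-c}^0 log (c / |t|) dt = c`; take `c = β β'`.
On `(0, β')`, `ψ` is nondecreasing and `log (1 / t)` decreasing, so pointwise
`(ψ t - ψ t₀) (log (1 / t) - log (1 / t₀)) ≤ 0`; with `t₀ = β' / e`, where the weight equals its
mean `1 + log (1 / β')`, integrating gives `∫₀^β' ψ log (1 / t) ≤ (1 + log (1 / β')) ∫₀^β' ψ`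
(Chebyshev's integral inequality).
-/

open MeasureTheory Set Real

lemma log_one_div_abs (t : ℝ) : log (1 / |t|) = -log t := by
  rw [one_div, log_inv, log_abs]

lemma integrableOn_log_one_div_abs (a b : ℝ) :
    IntegrableOn (fun t => log (1 / |t|)) (Ioo a b) := by
  simp only [log_one_div_abs]
  exact ((intervalIntegral.intervalIntegrable_log' (a := a) (b := b)).def'.mono_set
    (Ioo_subset_Ioc_self.trans Ioc_subset_uIoc)).neg

lemma setIntegral_Ioo_log_one_div_abs {a b : ℝ} (hab : a ≤ b) :
    ∫ t in Ioo a b, log (1 / |t|) = a * log a - b * log b + b - a := by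
  simp only [log_one_div_abs]
  rw [integral_neg, ← integral_Ioc_eq_integral_Ioo, ← intervalIntegral.integral_of_le hab,
    integral_log]
  ring

lemma setIntegral_Ioo_eq_add {E : Type*} [NormedAddCommGroup E] [NormedSpace ℝ E]
    {f : ℝ → E} {a b c : ℝ} (hab : a < b) (hbc : b ≤ c)
    (hfab : IntegrableOn f (Ioo a b)) (hfbc : IntegrableOn f (Ioo b c)) :
    ∫ t in Ioo a c, f t = (∫ t in Ioo a b, f t) + ∫ t in Ioo b c, f t := by
  rw [← Ioo_union_Ico_eq_Ioo hab hbc,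
    setIntegral_union (disjoint_left.2 fun _ hx hx' => hx.2.not_ge hx'.1) measurableSet_Ico
      hfab ((integrableOn_Ico_iff_integrableOn_Ioo).2 hfbc), integral_Ico_eq_integral_Ioo]

lemma MonotoneOn.mul_sub_le_setIntegral_Ioo {ψ : ℝ → ℝ} {s : Set ℝ} {a b t : ℝ}
    (hmono : MonotoneOn ψ s) (ht : t ∈ s) (hta : t ≤ a) (hab : a ≤ b) (hsub : Ioo a b ⊆ s)
    (hψ : IntegrableOn ψ (Ioo a b)) :
    ψ t * (b - a) ≤ ∫ x in Ioo a b, ψ x := by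
  have := setIntegral_ge_of_const_le_real measurableSet_Ioo measure_Ioo_lt_top.ne
    (fun x hx => hmono ht (hsub hx) (hta.trans hx.1.le)) hψ
  rwa [Real.volume_real_Ioo_of_le hab] at this

lemma setIntegral_Ioo_neg_mul_log_le {a c M : ℝ} (hc : 0 < c) (hca : c ≤ a) {φ : ℝ → ℝ}
    (h0 : ∀ t ∈ Ioo (-a) 0, 0 ≤ φ t) (hM : ∀ t ∈ Ioo (-a) 0, φ t ≤ M)
    (hφ : IntegrableOn φ (Ioo (-a) 0)) :
    IntegrableOn (fun t => φ t * log (1 / |t|)) (Ioo (-a) 0) ∧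
      ∫ t in Ioo (-a) 0, φ t * log (1 / |t|) ≤ log (1 / c) * (∫ t in Ioo (-a) 0, φ t) + M * c := by
  set excess : ℝ → ℝ := (Ioo (-c) 0).indicator fun t => log (1 / |t|) - log (1 / c)
  have hint : IntegrableOn (fun t => φ t * log (1 / |t|)) (Ioo (-a) 0) := by
    refine (integrableOn_log_one_div_abs _ _).bdd_mul hφ.aestronglyMeasurable (c := M) ?_
    filter_upwards [ae_restrict_mem measurableSet_Ioo] with t ht
    rw [norm_of_nonneg (h0 t ht)]
    exact hM t ht
  have hexcess : IntegrableOn excess (Ioo (-a) 0) :=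
    ((integrableOn_log_one_div_abs _ _).sub
      (integrableOn_const measure_Ioo_lt_top.ne)).indicator measurableSet_Ioo
  have hexcess_integral : ∫ t in Ioo (-a) 0, excess t = c := by
    rw [setIntegral_indicator measurableSet_Ioo,
      inter_eq_right.2 (Ioo_subset_Ioo_left (neg_le_neg hca)),
      integral_sub (integrableOn_log_one_div_abs _ _) (integrableOn_const measure_Ioo_lt_top.ne),
      setIntegral_Ioo_log_one_div_abs (by linarith), setIntegral_const,
      Real.volume_real_Ioo_of_le (by linarith), log_neg_eq_log, one_div, log_inv, smul_eq_mul]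
    ring
  have hpt : ∀ t ∈ Ioo (-a) 0, φ t * log (1 / |t|) ≤ log (1 / c) * φ t + M * excess t := by
    intro t ht
    by_cases htc : t ∈ Ioo (-c) 0
    · have hpos : 0 ≤ log (1 / |t|) - log (1 / c) := by
        rw [sub_nonneg]
        gcongr
        · exact abs_pos.2 htc.2.ne
        · rw [abs_of_neg htc.2]; linarith [htc.1]
      simp only [excess, indicator_of_mem htc]
      nlinarith [mul_le_mul_of_nonneg_right (hM t ht) hpos]
    · have hle : log (1 / |t|) ≤ log (1 / c) := by
        have : c ≤ |t| := by
          rw [abs_of_neg ht.2]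
          by_contra h
          exact htc ⟨by linarith, ht.2⟩
        exact log_le_log (one_div_pos.2 (hc.trans_le this)) (one_div_le_one_div_of_le hc this)
      simp only [excess, indicator_of_notMem htc, mul_zero, add_zero]
      nlinarith [mul_le_mul_of_nonneg_left hle (h0 t ht)]
  refine ⟨hint, ?_⟩
  calc ∫ t in Ioo (-a) 0, φ t * log (1 / |t|)
      ≤ ∫ t in Ioo (-a) 0, (log (1 / c) * φ t + M * excess t) :=
        setIntegral_mono_on hint ((hφ.const_mul _).add (hexcess.const_mul _)) measurableSet_Ioo hpt
    _ = log (1 / c) * (∫ t in Ioo (-a) 0, φ t) + M * c := by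
        rw [integral_add (hφ.const_mul _) (hexcess.const_mul _), integral_const_mul,
          integral_const_mul, hexcess_integral]

lemma setIntegral_Ioo_mul_log_le_of_monotoneOn {b : ℝ} (hb : 0 < b) {ψ : ℝ → ℝ}
    (h0 : ∀ t ∈ Ioo 0 b, 0 ≤ ψ t) (hmono : MonotoneOn ψ (Ioo 0 b))
    (hψ : IntegrableOn ψ (Ioo 0 b)) :
    IntegrableOn (fun t => ψ t * log (1 / |t|)) (Ioo 0 b) ∧
      ∫ t in Ioo 0 b, ψ t * log (1 / |t|) ≤ (1 + log (1 / b)) * ∫ t in Ioo 0 b, ψ t := by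
  set K := 1 + log (1 / b) with hK_def
  have hlog : IntegrableOn (fun t => log (1 / |t|)) (Ioo 0 b) := integrableOn_log_one_div_abs 0 b
  have hK : IntegrableOn (fun _ => K) (Ioo 0 b) := integrableOn_const measure_Ioo_lt_top.ne
  set t₀ := b * exp (-1)
  have ht₀ : t₀ ∈ Ioo 0 b := ⟨by positivity,
    mul_lt_of_lt_one_right hb ((exp_lt_exp.2 neg_one_lt_zero).trans_eq exp_zero)⟩
  have hlog_t₀ : log (1 / |t₀|) = K := by
    rw [log_one_div_abs, log_mul hb.ne' (exp_pos _).ne', log_exp, hK_def, one_div, log_inv]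
    ring
  have hanti : AntitoneOn (fun t => log (1 / |t|)) (Ioo 0 b) := by
    intro x hx y hy hxy
    simp only [log_one_div_abs, neg_le_neg_iff]
    exact log_le_log hx.1 hxy
  have hmean : ∫ t in Ioo 0 b, (log (1 / |t|) - K) = 0 := by
    rw [integral_sub hlog hK, setIntegral_Ioo_log_one_div_abs hb.le, setIntegral_const,
      Real.volume_real_Ioo_of_le hb.le, smul_eq_mul, hK_def, one_div, log_inv]
    ring
  have hcheb : ∀ t ∈ Ioo 0 b, ψ t * (log (1 / |t|) - K) ≤ ψ t₀ * (log (1 / |t|) - K) := by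
    intro t ht
    have := (hmono.antivaryOn hanti).sub_mul_sub_nonpos ht₀ ht
    rw [hlog_t₀] at this
    nlinarith
  have hlower : ∀ t ∈ Ioo 0 b, log (1 / b) * ψ t ≤ ψ t * log (1 / |t|) := by
    intro t ht
    rw [mul_comm]
    refine mul_le_mul_of_nonneg_left ?_ (h0 t ht)
    rw [abs_of_pos ht.1]
    exact log_le_log (one_div_pos.2 hb) (one_div_le_one_div_of_le ht.1 ht.2.le)
  have hint : IntegrableOn (fun t => ψ t * log (1 / |t|)) (Ioo 0 b) := by
    refine integrable_of_le_of_le (hψ.aestronglyMeasurable.mul hlog.aestronglyMeasurable)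
      (g₁ := fun t => log (1 / b) * ψ t) (g₂ := fun t => ψ t₀ * (log (1 / |t|) - K) + K * ψ t)
      ?_ ?_ (hψ.const_mul _) (((hlog.sub hK).const_mul _).add (hψ.const_mul _))
    · filter_upwards [ae_restrict_mem measurableSet_Ioo] with t ht using hlower t ht
    · filter_upwards [ae_restrict_mem measurableSet_Ioo] with t ht
      linarith [hcheb t ht]
  refine ⟨hint, ?_⟩
  have hsplit : ∫ t in Ioo 0 b, ψ t * (log (1 / |t|) - K)
      = (∫ t in Ioo 0 b, ψ t * log (1 / |t|)) - K * ∫ t in Ioo 0 b, ψ t := by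
    simp only [mul_sub]
    rw [integral_sub hint (hψ.mul_const _), integral_mul_const, mul_comm]
  have hintK : IntegrableOn (fun t => ψ t * (log (1 / |t|) - K)) (Ioo 0 b) :=
    (hint.sub (hψ.mul_const K)).congr_fun (fun t _ => (mul_sub _ _ _).symm) measurableSet_Ioo
  have : ∫ t in Ioo 0 b, ψ t * (log (1 / |t|) - K) ≤ 0 :=
    calc _ ≤ ∫ t in Ioo 0 b, ψ t₀ * (log (1 / |t|) - K) :=
          setIntegral_mono_on hintK ((hlog.sub hK).const_mul _) measurableSet_Ioo hcheb
      _ = 0 := by rw [integral_const_mul, hmean, mul_zero]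
  linarith

theorem stmt18 (β β' : ℝ) (hβ : β ∈ Set.Ioo (0 : ℝ) 1) (hβ' : β' ∈ Set.Ioo (0 : ℝ) 1)
    (ψ : ℝ → ℝ) (hnn : ∀ t ∈ Set.Ioo (-β) β', 0 ≤ ψ t)
    (hmono : MonotoneOn ψ (Set.Ioo (-β) β'))
    (hint : IntegrableOn ψ (Set.Ioo (-β) β'))
    (hmass : (∫ t in Set.Ioo (-β) β', ψ t) ≤ 1) :
    (∫ t in Set.Ioo (-β) β', ψ t * Real.log (1 / |t|)) ≤
      3 * Real.log (1 / (β * β')) + 2 := by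
  obtain ⟨hβ0, hβ1⟩ := hβ
  obtain ⟨hβ'0, hβ'1⟩ := hβ'
  have hneg_sub : Ioo (-β) 0 ⊆ Ioo (-β) β' := Ioo_subset_Ioo_right hβ'0.le
  have hpos_sub : Ioo 0 β' ⊆ Ioo (-β) β' := Ioo_subset_Ioo_left (by linarith)
  have hψ_neg := hint.mono_set hneg_sub
  have hψ_pos := hint.mono_set hpos_sub
  rw [setIntegral_Ioo_eq_add (neg_lt_zero.2 hβ0) hβ'0.le hψ_neg hψ_pos] at hmass
  have hmass_neg : 0 ≤ ∫ t in Ioo (-β) 0, ψ t :=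
    setIntegral_nonneg measurableSet_Ioo fun t ht => hnn t (hneg_sub ht)
  have hmass_pos : 0 ≤ ∫ t in Ioo 0 β', ψ t :=
    setIntegral_nonneg measurableSet_Ioo fun t ht => hnn t (hpos_sub ht)
  have hψ_le : ∀ t ∈ Ioo (-β) 0, ψ t ≤ 1 / β' := fun t ht => by
    have := hmono.mul_sub_le_setIntegral_Ioo (hneg_sub ht) ht.2.le hβ'0.le hpos_sub hψ_pos
    rw [le_div_iff₀ hβ'0]
    linarith
  obtain ⟨hI_neg, hneg⟩ := setIntegral_Ioo_neg_mul_log_le (mul_pos hβ0 hβ'0)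
    (mul_le_of_le_one_right hβ0.le hβ'1.le) (fun t ht => hnn t (hneg_sub ht)) hψ_le hψ_neg
  obtain ⟨hI_pos, hpos⟩ := setIntegral_Ioo_mul_log_le_of_monotoneOn hβ'0
    (fun t ht => hnn t (hpos_sub ht)) (hmono.mono hpos_sub) hψ_pos
  rw [setIntegral_Ioo_eq_add (neg_lt_zero.2 hβ0) hβ'0.le hI_neg hI_pos]
  have hL₀ : 0 ≤ log (1 / β') := log_nonneg (by rw [le_div_iff₀ hβ'0]; linarith)
  have hL : log (1 / β') ≤ log (1 / (β * β')) :=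
    log_le_log (by positivity) (one_div_le_one_div_of_le (by positivity)
      (mul_le_of_le_one_left hβ'0.le hβ1.le))
  have hexcess : 1 / β' * (β * β') = β := by field_simp
  nlinarith
end
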